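/- arXiv:2508.01374 — 2 statements merged into one kernel-verified Lean document; each statement's English description precedes it below -/
import Mathlib

section
/- For n ∈ {6,4,3,2}, the sum −log(κ/n) − ∑_{j=1}^{n−1} (ω^j + ω^{−j} − 1) log(1 − ω^j) equals 0, where ω = e^{2πi/n} and κ = 432, 64, 27, 16 respectively for n = 6, 4, 3, 2. -/
/-!
Since `ω ^ (n - j) = ω⁻¹ ^ j = conj (ω ^ j)`, the substitution `j ↦ n - j` pairs `log (1 - ω ^ j)`
with the logarithm of its conjugate; as `1 - ω ^ j` has positive real part, the two add up to
`log ‖1 - ω ^ j‖ ^ 2 = log (2 - tⱼ)` with `tⱼ = ω ^ j + ω⁻¹ ^ j`, so the sum is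
`½ ∑ (tⱼ - 1) log (2 - tⱼ)`. The `tⱼ` are the values of the Dickson polynomials
(`Dⱼ (x + x⁻¹) = x ^ j + x⁻¹ ^ j`) at `t₁ = 2 cos (2π / n)`, an integer for `n ∈ {2, 3, 4, 6}`,
so what remains is an identity between `log 2` and `log 3`.
-/

open Complex ComplexConjugate Finset

namespace Complex

lemma log_add_log_conj {z : ℂ} (hz : z.arg ≠ Real.pi) :
    log z + log (conj z) = log (z * conj z) := by
  rcases eq_or_ne z 0 with rfl | h0
  · simp
  rw [log_mul h0 ((map_ne_zero _).2 h0) (by simp [arg_conj, hz, Real.pi_pos, Real.pi_pos.le])]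

lemma re_one_sub_pos {ζ : ℂ} (hζ : ‖ζ‖ = 1) (h1 : ζ ≠ 1) : 0 < (1 - ζ).re := by
  have hpos := normSq_pos.2 (sub_ne_zero.2 h1.symm)
  have hnorm : ζ.re * ζ.re + ζ.im * ζ.im = 1 := by
    rw [← normSq_apply, normSq_eq_norm_sq, hζ, one_pow]
  rw [normSq_apply] at hpos
  simp only [sub_re, one_re, sub_im, one_im] at hpos ⊢
  nlinarith

lemma log_one_sub_add_log_one_sub_inv {ζ : ℂ} (hζ : ‖ζ‖ = 1) (h1 : ζ ≠ 1) :
    log (1 - ζ) + log (1 - ζ⁻¹) = log (2 - (ζ + ζ⁻¹)) := by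
  have harg : (1 - ζ).arg ≠ Real.pi := fun h =>
    (re_one_sub_pos hζ h1).not_ge (arg_eq_pi_iff.1 h).1.le
  have hconj : 1 - ζ⁻¹ = conj (1 - ζ) := by rw [map_sub, map_one, RCLike.inv_eq_conj hζ]
  have hζ0 : ζ ≠ 0 := norm_ne_zero_iff.1 (hζ ▸ one_ne_zero)
  rw [hconj, log_add_log_conj harg, ← hconj]
  congr 1
  field_simp
  ring

lemma exp_two_pi_I_div_add_inv (n : ℕ) :
    exp (2 * Real.pi * I / n) + (exp (2 * Real.pi * I / n))⁻¹ =
      2 * Real.cos (2 * Real.pi / n) := by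
  rw [← exp_neg, show 2 * Real.pi * I / n = ((2 * Real.pi / n : ℝ) : ℂ) * I by push_cast; ring,
    ← neg_mul, ← two_cos, ofReal_cos]

end Complex

open Polynomial

lemma Polynomial.dickson_one_one_eval_add_inv_of_ne_zero {K : Type*} [Field K] {x : K}
    (hx : x ≠ 0) (j : ℕ) : x ^ j + (x ^ j)⁻¹ = (dickson 1 (1 : K) j).eval (x + x⁻¹) := by
  rw [dickson_one_one_eval_add_inv x x⁻¹ (mul_inv_cancel₀ hx), inv_pow]

namespace IsPrimitiveRoot

variable {ω : ℂ} {n : ℕ}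

theorem two_mul_sum_mul_log_one_sub_pow (hω : IsPrimitiveRoot ω n) (f : ℂ → ℂ) :
    2 * ∑ j ∈ Icc 1 (n - 1), f (ω ^ j + (ω ^ j)⁻¹) * log (1 - ω ^ j) =
      ∑ j ∈ Icc 1 (n - 1), f (ω ^ j + (ω ^ j)⁻¹) * log (2 - (ω ^ j + (ω ^ j)⁻¹)) := by
  have hinv : ∀ j ∈ Icc 1 (n - 1), ω ^ (n - j) = (ω ^ j)⁻¹ := fun j hj =>
    eq_inv_of_mul_eq_one_left <| by
      rw [← pow_add, Nat.sub_add_cancel (by grind), hω.pow_eq_one]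
  have hreflect : ∑ j ∈ Icc 1 (n - 1), f (ω ^ j + (ω ^ j)⁻¹) * log (1 - ω ^ j) =
      ∑ j ∈ Icc 1 (n - 1), f (ω ^ j + (ω ^ j)⁻¹) * log (1 - (ω ^ j)⁻¹) := by
    refine sum_nbij' (n - ·) (n - ·) (by grind) (by grind) (by grind) (by grind) fun j hj => ?_
    simp only [hinv j hj, inv_inv, add_comm]
  rw [two_mul]
  nth_rw 2 [hreflect]
  rw [← sum_add_distrib]
  refine sum_congr rfl fun j hj => ?_
  have hn : n ≠ 0 := by grind
  rw [← mul_add, log_one_sub_add_log_one_sub_inv (by rw [norm_pow, hω.norm'_eq_one hn, one_pow])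
    (hω.pow_ne_one_of_pos_of_lt (by grind) (by grind))]

end IsPrimitiveRoot

theorem sum_mul_log_one_sub_pow_eq_of_eq_exp {n : ℕ} (hn : n ≠ 0) {ω : ℂ}
    (hω : ω = exp (2 * Real.pi * I / n)) :
    ∑ j ∈ Icc 1 (n - 1), (ω ^ j + ω ^ (-(j : ℤ)) - 1) * log (1 - ω ^ j) =
      1 / 2 * ∑ j ∈ Icc 1 (n - 1),
        ((dickson 1 (1 : ℂ) j).eval (2 * (Real.cos (2 * Real.pi / n) : ℂ)) - 1) *
          log (2 - (dickson 1 (1 : ℂ) j).eval (2 * (Real.cos (2 * Real.pi / n) : ℂ))) := by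
  have hprim : IsPrimitiveRoot ω n := hω ▸ isPrimitiveRoot_exp n hn
  have ht : ω + ω⁻¹ = 2 * (Real.cos (2 * Real.pi / n) : ℂ) := hω ▸ exp_two_pi_I_div_add_inv n
  have hreflect := hprim.two_mul_sum_mul_log_one_sub_pow (· - 1)
  simp only [zpow_neg, zpow_natCast, dickson_one_one_eval_add_inv_of_ne_zero (hprim.ne_zero hn),
    ht] at hreflect ⊢
  linear_combination (1 / 2 : ℂ) * hreflect

/-- For `n ∈ {6,4,3,2}` with `κ = 432, 64, 27, 16` respectively,
`−log(κ/n) − ∑_{j=1}^{n−1} (ω^j + ω^{−j} − 1) log(1 − ω^j) = 0`, where `ω = e^{2πi/n}`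
and `log` is the principal branch of the complex logarithm. -/
theorem sum_root_of_unity_log_eq_zero (n : ℕ) (κ : ℝ)
    (h : (n, κ) = (6, 432) ∨ (n, κ) = (4, 64) ∨ (n, κ) = (3, 27) ∨ (n, κ) = (2, 16))
    (ω : ℂ) (hω : ω = Complex.exp (2 * Real.pi * Complex.I / n)) :
    -Complex.log ((κ : ℂ) / (n : ℂ)) -
        ∑ j ∈ Finset.Icc 1 (n - 1),
          (ω ^ (j : ℕ) + ω ^ (-(j : ℤ)) - 1) * Complex.log (1 - ω ^ (j : ℕ)) = 0 := by
  simp only [Prod.mk.injEq] at h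
  rw [sum_mul_log_one_sub_pow_eq_of_eq_exp (by omega) hω]
  rcases h with ⟨rfl, rfl⟩ | ⟨rfl, rfl⟩ | ⟨rfl, rfl⟩ | ⟨rfl, rfl⟩
  · rw [show 2 * Real.pi / (6 : ℕ) = Real.pi / 3 by push_cast; ring, Real.cos_pi_div_three]
    norm_num [sum_Icc_succ_top, dickson_add_two]
    rw [← ofNat_log, ← ofNat_log, ← ofNat_log, show (72 : ℝ) = 2 ^ 3 * 3 ^ 2 by norm_num,
      show (4 : ℝ) = 2 ^ 2 by norm_num, Real.log_mul (by norm_num) (by norm_num)]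
    push_cast [Real.log_pow]
    ring
  · rw [show 2 * Real.pi / (4 : ℕ) = Real.pi / 2 by push_cast; ring, Real.cos_pi_div_two]
    norm_num [sum_Icc_succ_top, dickson_add_two]
    rw [← ofNat_log, ← ofNat_log, ← ofNat_log, show (16 : ℝ) = 2 ^ 4 by norm_num,
      show (4 : ℝ) = 2 ^ 2 by norm_num]
    push_cast [Real.log_pow]
    ring
  · rw [show 2 * Real.pi / (3 : ℕ) = Real.pi - Real.pi / 3 by push_cast; ring, Real.cos_pi_sub,
      Real.cos_pi_div_three]
    norm_num [sum_Icc_succ_top, dickson_add_two]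
    rw [← ofNat_log, ← ofNat_log, show (9 : ℝ) = 3 ^ 2 by norm_num]
    push_cast [Real.log_pow]
    ring
  · rw [show 2 * Real.pi / (2 : ℕ) = Real.pi by push_cast; ring, Real.cos_pi]
    norm_num [sum_Icc_succ_top, dickson_add_two]
    rw [← ofNat_log, ← ofNat_log, show (8 : ℝ) = 2 ^ 3 by norm_num,
      show (4 : ℝ) = 2 ^ 2 by norm_num]
    push_cast [Real.log_pow]
    ring
end

section
/- Let F_k(y,v) ∈ ℂ(y)[v] and define the derivation D on ℂ(y)[v] by D(p(y)) = θ_y p for p ∈ ℂ(y) (θ_y = y d/dy) and D(v) = −((κy − 2μ)/(y² + κy − μ)) v − ((λy − μ)/(y² + κy − μ)) − v², for constants κ, λ, μ with μ ≠ 0 such that y² + κy − μ has nonzero constant term −μ. Then D maps the subring R = ℂ(y)[v] ∩ (ℂ⟦y⟧ + w·ℂ((y))[w]) into the ideal I = ℂ(y)[v] ∩ (y ℂ⟦y⟧ + w·ℂ((y))[w]), where w = v − v₀ for any fixed power series v₀ ∈ ℂ⟦y⟧ satisfying D(v₀) = −((κy−2μ)/(y²+κy−μ)) v₀ − ((λy−μ)/(y²+κy−μ))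 − v₀². -/
open Polynomial HahnSeries

noncomputable section

/-- The Euler operator `θ_y = y d/dy` on formal Laurent series. -/
def thetaL (f : LaurentSeries ℂ) : LaurentSeries ℂ where
  coeff n := (n : ℂ) * f.coeff n
  isPWO_support' := f.isPWO_support'.mono (by
    intro n hn
    simp only [Function.mem_support, ne_eq] at hn ⊢
    intro h
    exact hn (by rw [h, mul_zero]))

/-- The derivation `D` on `ℂ((y))[v]` determined by `D = θ_y` on coefficients and a
prescribed value `Dv` on the variable `v` (represented by `Polynomial.X`). -/
def Dpoly (Dv : Polynomial (LaurentSeries ℂ)) (p : Polynomial (LaurentSeries ℂ)) :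
    Polynomial (LaurentSeries ℂ) :=
  p.sum (fun k c => Polynomial.C (thetaL c) * Polynomial.X ^ k) +
    Polynomial.derivative p * Dv

/-!
`θ` is a derivation of `ℂ((y))` with `θ y = y`, so it maps `ℂ(y)` into itself: on a polynomial
`P(y)` it gives `y P'(y)`, and the quotient rule does the rest. Hence `D` preserves `ℂ(y)[v]`.
Since `v₀` solves the same Riccati equation as `v`, `D w = w (-A - v - v₀)`, so by the Leibniz
rule `D (c + w r) = θ c + w (…)`, and `θ` kills the constant term of the power series `c`.
-/

open scoped RatFunc

theorem Derivation.apply_mem_fieldRange_ratFunc {K L : Type*} [Field K] [Field L] [Algebra K L]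
    (d : Derivation K L L) (φ : RatFunc K →ₐ[K] L) (hX : d (φ RatFunc.X) ∈ φ.fieldRange)
    (q : RatFunc K) : d (φ q) ∈ φ.fieldRange := by
  have hφ (r : RatFunc K) : φ r ∈ φ.fieldRange := ⟨r, rfl⟩
  have hpoly (P : K[X]) : d (φ (algebraMap K[X] (RatFunc K) P)) ∈ φ.fieldRange := by
    rw [← RatFunc.aeval_X_left_eq_algebraMap, ← aeval_algHom_apply, d.map_aeval,
      aeval_algHom_apply, smul_eq_mul]
    exact mul_mem (hφ _) hX
  rw [← q.num_div_denom, map_div₀, d.leibniz_div]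
  simp only [smul_eq_mul]
  exact mul_mem (pow_mem (inv_mem (hφ _)) 2)
    (sub_mem (mul_mem (hφ _) (hpoly _)) (mul_mem (hφ _) (hpoly _)))

namespace RatFunc

variable {K : Type*} [Field K]

theorem algebraMap_C_laurentSeries (a : K) :
    algebraMap (RatFunc K) (LaurentSeries K) (RatFunc.C a) = HahnSeries.C a := by
  rw [← RatFunc.algebraMap_C, ← IsScalarTower.algebraMap_apply]
  simp

variable (K) in
def toLaurentSeriesAlgHom : RatFunc K →ₐ[K] LaurentSeries K :=
  { algebraMap (RatFunc K) (LaurentSeries K) with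
    commutes' := fun a => by
      simp [RatFunc.algebraMap_eq_C, algebraMap_C_laurentSeries,
        HahnSeries.algebraMap_apply'] }

theorem toLaurentSeriesAlgHom_apply (q : RatFunc K) :
    toLaurentSeriesAlgHom K q = algebraMap (RatFunc K) (LaurentSeries K) q := rfl

end RatFunc

theorem coeff_thetaL (f : LaurentSeries ℂ) (n : ℤ) : (thetaL f).coeff n = n * f.coeff n := rfl

theorem thetaL_mul (f g : LaurentSeries ℂ) : thetaL (f * g) = thetaL f * g + f * thetaL g := by
  have hsupp (h : LaurentSeries ℂ) : (thetaL h).support ⊆ h.support := fun n hn hh =>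
    hn (by rw [coeff_thetaL, hh, mul_zero])
  ext n
  rw [HahnSeries.coeff_add, coeff_thetaL, HahnSeries.coeff_mul,
    coeff_mul_left' f.isPWO_support (hsupp f), coeff_mul_right' g.isPWO_support (hsupp g),
    Finset.mul_sum, ← Finset.sum_add_distrib]
  refine Finset.sum_congr rfl fun ij hij => ?_
  rw [coeff_thetaL, coeff_thetaL, ← (Finset.mem_antidiagonal.1 hij).2.2]
  push_cast
  ring

theorem thetaL_algebraMap (c : ℂ) : thetaL (algebraMap ℂ (LaurentSeries ℂ) c) = 0 := by
  ext n
  by_cases h : n = 0 <;> simp [coeff_thetaL, HahnSeries.algebraMap_apply', h]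

-- The `ℂ`-module structure must be the one of the `ℂ`-algebra `LaurentSeries ℂ` (for
-- `Derivation.apply_mem_fieldRange_ratFunc`); it is not defeq to `HahnSeries.instModule`.
def thetaDerivation :
    @Derivation ℂ (LaurentSeries ℂ) (LaurentSeries ℂ) _ _ _ _ _ Algebra.toModule :=
  letI : Module ℂ (LaurentSeries ℂ) := Algebra.toModule
  { toFun := thetaL
    map_add' f g := by ext n; simp [coeff_thetaL, mul_add]
    map_smul' c f := by simp [Algebra.smul_def, thetaL_mul, thetaL_algebraMap]
    map_one_eq_zero' := by simpa using thetaL_algebraMap 1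
    leibniz' f g := by simp [thetaL_mul, add_comm, mul_comm] }

@[simp]
theorem thetaDerivation_apply (f : LaurentSeries ℂ) : thetaDerivation f = thetaL f := rfl

theorem thetaL_single_one_one : thetaL (single 1 1) = single 1 1 := by
  ext n
  rw [coeff_thetaL]
  by_cases h : n = 1 <;> simp [h]

theorem thetaL_mem_range_algebraMap (q : RatFunc ℂ) :
    thetaL (algebraMap (RatFunc ℂ) (LaurentSeries ℂ) q) ∈
      Set.range (algebraMap (RatFunc ℂ) (LaurentSeries ℂ)) := by
  have hX : thetaDerivation (RatFunc.toLaurentSeriesAlgHom ℂ RatFunc.X) ∈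
      (RatFunc.toLaurentSeriesAlgHom ℂ).fieldRange := by
    rw [RatFunc.toLaurentSeriesAlgHom_apply, thetaDerivation_apply, RatFunc.coe_X,
      thetaL_single_one_one, ← RatFunc.coe_X]
    exact ⟨RatFunc.X, rfl⟩
  exact thetaDerivation.apply_mem_fieldRange_ratFunc _ hX q

theorem thetaL_ofPowerSeries (c : PowerSeries ℂ) :
    thetaL (ofPowerSeries ℤ ℂ c) =
      ofPowerSeries ℤ ℂ (PowerSeries.mk fun n => n * PowerSeries.coeff n c) := by
  ext n
  rw [coeff_thetaL, PowerSeries.coeff_coe, PowerSeries.coeff_coe]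
  split_ifs with hn
  · rw [mul_zero]
  · lift n to ℕ using not_lt.1 hn
    simp

def thetaCoeffs (p : (LaurentSeries ℂ)[X]) : (LaurentSeries ℂ)[X] :=
  p.sum fun k c => Polynomial.C (thetaL c) * X ^ k

theorem Dpoly_eq (Dv p : (LaurentSeries ℂ)[X]) :
    Dpoly Dv p = thetaCoeffs p + derivative p * Dv := rfl

theorem coeff_thetaCoeffs (p : (LaurentSeries ℂ)[X]) (k : ℕ) :
    (thetaCoeffs p).coeff k = thetaL (p.coeff k) := by
  simp only [thetaCoeffs, Polynomial.sum_def, finsetSum_coeff, coeff_C_mul_X_pow]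
  rw [Finset.sum_ite_eq]
  split_ifs with hk
  · rfl
  · rw [notMem_support_iff.1 hk, ← thetaDerivation_apply, map_zero]

theorem thetaCoeffs_add (p q : (LaurentSeries ℂ)[X]) :
    thetaCoeffs (p + q) = thetaCoeffs p + thetaCoeffs q := by
  ext k : 1
  simp [coeff_thetaCoeffs, ← thetaDerivation_apply]

theorem thetaCoeffs_sub (p q : (LaurentSeries ℂ)[X]) :
    thetaCoeffs (p - q) = thetaCoeffs p - thetaCoeffs q := by
  ext k : 1
  simp [coeff_thetaCoeffs, ← thetaDerivation_apply]

theorem thetaCoeffs_mul (p q : (LaurentSeries ℂ)[X]) :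
    thetaCoeffs (p * q) = thetaCoeffs p * q + p * thetaCoeffs q := by
  ext k : 1
  simp only [Polynomial.coeff_add, coeff_thetaCoeffs, Polynomial.coeff_mul,
    ← thetaDerivation_apply, map_sum, Derivation.leibniz, smul_eq_mul, ← Finset.sum_add_distrib]
  exact Finset.sum_congr rfl fun _ _ => by ring

theorem thetaCoeffs_C (a : LaurentSeries ℂ) :
    thetaCoeffs (Polynomial.C a) = Polynomial.C (thetaL a) := by
  ext k : 1
  rcases k with _ | k <;> simp [coeff_thetaCoeffs, coeff_C, ← thetaDerivation_apply]

theorem thetaCoeffs_X : thetaCoeffs (X : (LaurentSeries ℂ)[X]) = 0 := by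
  ext k : 1
  rw [coeff_thetaCoeffs, Polynomial.coeff_zero, ← thetaDerivation_apply, coeff_X]
  split_ifs <;> simp only [Derivation.map_one_eq_zero, map_zero]

section Dpoly

variable (Dv : (LaurentSeries ℂ)[X])

theorem Dpoly_add (p q : (LaurentSeries ℂ)[X]) : Dpoly Dv (p + q) = Dpoly Dv p + Dpoly Dv q := by
  simp only [Dpoly_eq, thetaCoeffs_add, derivative_add]
  ring

theorem Dpoly_sub (p q : (LaurentSeries ℂ)[X]) : Dpoly Dv (p - q) = Dpoly Dv p - Dpoly Dv q := by
  simp only [Dpoly_eq, thetaCoeffs_sub, derivative_sub]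
  ring

theorem Dpoly_mul (p q : (LaurentSeries ℂ)[X]) :
    Dpoly Dv (p * q) = Dpoly Dv p * q + p * Dpoly Dv q := by
  simp only [Dpoly_eq, thetaCoeffs_mul, derivative_mul]
  ring

theorem Dpoly_C (a : LaurentSeries ℂ) : Dpoly Dv (Polynomial.C a) = Polynomial.C (thetaL a) := by
  simp [Dpoly_eq, thetaCoeffs_C]

theorem Dpoly_X : Dpoly Dv X = Dv := by
  simp [Dpoly_eq, thetaCoeffs_X]

theorem Dpoly_mem_lifts {R : Type*} [Semiring R] {f : R →+* LaurentSeries ℂ}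
    (hf : ∀ a, thetaL (f a) ∈ Set.range f) (hDv : Dv ∈ lifts f) {p : (LaurentSeries ℂ)[X]}
    (hp : p ∈ lifts f) : Dpoly Dv p ∈ lifts f := by
  have hθ : thetaCoeffs p ∈ lifts f := by
    rw [lifts_iff_coeff_lifts] at hp ⊢
    intro k
    obtain ⟨a, ha⟩ := hp k
    rw [coeff_thetaCoeffs, ← ha]
    exact hf a
  obtain ⟨q, rfl⟩ := (mem_lifts p).1 hp
  have hder : derivative (q.map f) ∈ lifts f :=
    (mem_lifts _).2 ⟨derivative q, (derivative_map q f).symm⟩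
  exact add_mem hθ (mul_mem hder hDv)

theorem Dpoly_C_add_mul {w s : (LaurentSeries ℂ)[X]} (hw : Dpoly Dv w = w * s)
    (c : PowerSeries ℂ) (r : (LaurentSeries ℂ)[X]) :
    Dpoly Dv (Polynomial.C (ofPowerSeries ℤ ℂ c) + w * r) =
      Polynomial.C (ofPowerSeries ℤ ℂ (PowerSeries.mk fun n => n * PowerSeries.coeff n c)) +
        w * (s * r + Dpoly Dv r) := by
  rw [Dpoly_add, Dpoly_mul, Dpoly_C, thetaL_ofPowerSeries, hw]
  ring

end Dpoly

theorem Dpoly_X_sub_C_of_riccati {A B v : LaurentSeries ℂ} (hv : thetaL v = -A * v - B - v ^ 2) :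
    Dpoly (-Polynomial.C A * X - Polynomial.C B - X ^ 2) (X - Polynomial.C v) =
      (X - Polynomial.C v) * (-Polynomial.C A - X - Polynomial.C v) := by
  rw [Dpoly_sub, Dpoly_X, Dpoly_C, hv]
  simp only [map_sub, map_neg, map_mul, map_pow]
  ring

theorem derivation_maps_R_into_I_general (κ lam μ : ℂ)
    (y : LaurentSeries ℂ) (hy : y = HahnSeries.single 1 1)
    (u A B : LaurentSeries ℂ)
    (hu : u = y ^ 2 + HahnSeries.C κ * y - HahnSeries.C μ)
    (hA : A = (HahnSeries.C κ * y - 2 * HahnSeries.C μ) / u)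
    (hB : B = (HahnSeries.C lam * y - HahnSeries.C μ) / u)
    (Dv : Polynomial (LaurentSeries ℂ))
    (hDv : Dv = -(Polynomial.C A) * Polynomial.X - Polynomial.C B - Polynomial.X ^ 2)
    (v₀ : PowerSeries ℂ)
    (hv₀ : thetaL (HahnSeries.ofPowerSeries ℤ ℂ v₀) =
      -A * HahnSeries.ofPowerSeries ℤ ℂ v₀ - B - (HahnSeries.ofPowerSeries ℤ ℂ v₀) ^ 2)
    (w : Polynomial (LaurentSeries ℂ))
    (hw : w = Polynomial.X - Polynomial.C (HahnSeries.ofPowerSeries ℤ ℂ v₀))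
    (p : Polynomial (LaurentSeries ℂ))
    -- `p ∈ ℂ(y)[v]` : all coefficients are (Laurent expansions of) rational functions
    (hp_rat : ∀ k : ℕ, p.coeff k ∈ Set.range (@algebraMap (RatFunc ℂ) (LaurentSeries ℂ) _ _ (RatFunc.liftAlgebra ℂ (LaurentSeries ℂ))))
    -- `p ∈ ℂ⟦y⟧ + w·ℂ((y))[w]`
    (hp_R : ∃ c : PowerSeries ℂ, ∃ r : Polynomial (LaurentSeries ℂ),
      p = Polynomial.C (HahnSeries.ofPowerSeries ℤ ℂ c) + w * r) :
    (∀ k : ℕ, (Dpoly Dv p).coeff k ∈ Set.range (@algebraMap (RatFunc ℂ) (LaurentSeries ℂ) _ _ (RatFunc.liftAlgebra ℂ (LaurentSeries ℂ)))) ∧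
      ∃ c : PowerSeries ℂ, PowerSeries.constantCoeff c = 0 ∧
        ∃ r : Polynomial (LaurentSeries ℂ),
          Dpoly Dv p = Polynomial.C (HahnSeries.ofPowerSeries ℤ ℂ c) + w * r := by
  set f := algebraMap (RatFunc ℂ) (LaurentSeries ℂ)
  have hDv_lifts : Dv ∈ lifts f := by
    set q := RatFunc.X ^ 2 + RatFunc.C κ * RatFunc.X - RatFunc.C μ
    set a := (RatFunc.C κ * RatFunc.X - 2 * RatFunc.C μ) / q
    set b := (RatFunc.C lam * RatFunc.X - RatFunc.C μ) / q
    have hA' : A = f a := by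
      simp [f, a, q, hA, hu, hy, map_ofNat, RatFunc.algebraMap_C_laurentSeries]
    have hB' : B = f b := by
      simp [f, b, q, hB, hu, hy, RatFunc.algebraMap_C_laurentSeries]
    refine (mem_lifts _).2 ⟨-Polynomial.C a * X - Polynomial.C b - X ^ 2, ?_⟩
    simp only [hDv, hA', hB', Polynomial.map_sub, Polynomial.map_neg, Polynomial.map_mul,
      Polynomial.map_pow, Polynomial.map_C, Polynomial.map_X]
  refine ⟨(lifts_iff_coeff_lifts _).1 <|
    Dpoly_mem_lifts Dv thetaL_mem_range_algebraMap hDv_lifts ((lifts_iff_coeff_lifts p).2 hp_rat),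
    ?_⟩
  obtain ⟨c, r, rfl⟩ := hp_R
  have hDw : Dpoly Dv w = w * (-Polynomial.C A - X - Polynomial.C (ofPowerSeries ℤ ℂ v₀)) := by
    rw [hDv, hw]
    exact Dpoly_X_sub_C_of_riccati hv₀
  exact ⟨PowerSeries.mk fun n => n * PowerSeries.coeff n c, by simp, _,
    Dpoly_C_add_mul Dv hDw c r⟩

/-- Let `D` be the derivation on `ℂ(y)[v]` with `D = θ_y` on `ℂ(y)` and
`D(v) = −((κy − 2μ)/(y² + κy − μ)) v − ((λy − μ)/(y² + κy − μ)) − v²`, where `μ ≠ 0`.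
If `v₀ ∈ ℂ⟦y⟧` is a power series solution of the same Riccati equation, and
`w = v − v₀`, then `D` maps `R = ℂ(y)[v] ∩ (ℂ⟦y⟧ + w·ℂ((y))[w])` into
`I = ℂ(y)[v] ∩ (y ℂ⟦y⟧ + w·ℂ((y))[w])`. Here `ℂ(y)[v]` is realized as the set of
polynomials (in `v`) whose coefficients are Laurent expansions of rational functions. -/
theorem derivation_maps_R_into_I (κ lam μ : ℂ) (hμ : μ ≠ 0)
    (y : LaurentSeries ℂ) (hy : y = HahnSeries.single 1 1)
    (u A B : LaurentSeries ℂ)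
    (hu : u = y ^ 2 + HahnSeries.C κ * y - HahnSeries.C μ)
    (hA : A = (HahnSeries.C κ * y - 2 * HahnSeries.C μ) / u)
    (hB : B = (HahnSeries.C lam * y - HahnSeries.C μ) / u)
    (Dv : Polynomial (LaurentSeries ℂ))
    (hDv : Dv = -(Polynomial.C A) * Polynomial.X - Polynomial.C B - Polynomial.X ^ 2)
    (v₀ : PowerSeries ℂ)
    (hv₀ : thetaL (HahnSeries.ofPowerSeries ℤ ℂ v₀) =
      -A * HahnSeries.ofPowerSeries ℤ ℂ v₀ - B - (HahnSeries.ofPowerSeries ℤ ℂ v₀) ^ 2)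
    (w : Polynomial (LaurentSeries ℂ))
    (hw : w = Polynomial.X - Polynomial.C (HahnSeries.ofPowerSeries ℤ ℂ v₀))
    (p : Polynomial (LaurentSeries ℂ))
    -- `p ∈ ℂ(y)[v]` : all coefficients are (Laurent expansions of) rational functions
    (hp_rat : ∀ k : ℕ, p.coeff k ∈ Set.range (@algebraMap (RatFunc ℂ) (LaurentSeries ℂ) _ _ (RatFunc.liftAlgebra ℂ (LaurentSeries ℂ))))
    -- `p ∈ ℂ⟦y⟧ + w·ℂ((y))[w]`
    (hp_R : ∃ c : PowerSeries ℂ, ∃ r : Polynomial (LaurentSeries ℂ),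
      p = Polynomial.C (HahnSeries.ofPowerSeries ℤ ℂ c) + w * r) :
    (∀ k : ℕ, (Dpoly Dv p).coeff k ∈ Set.range (@algebraMap (RatFunc ℂ) (LaurentSeries ℂ) _ _ (RatFunc.liftAlgebra ℂ (LaurentSeries ℂ)))) ∧
      ∃ c : PowerSeries ℂ, PowerSeries.constantCoeff c = 0 ∧
        ∃ r : Polynomial (LaurentSeries ℂ),
          Dpoly Dv p = Polynomial.C (HahnSeries.ofPowerSeries ℤ ℂ c) + w * r :=
  derivation_maps_R_into_I_general κ lam μ y hy u A B hu hA hB Dv hDv v₀ hv₀ w hw p hp_rat hp_R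
end
end
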